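/- arXiv:2011.01804 — 2 statements merged into one kernel-verified Lean document; each statement's English description precedes it below -/
import Mathlib

section
/- Let f : ℝ^d → ℝ be positive and smooth with suitable integrability, and let P_s be the Ornstein–Uhlenbeck semigroup (P_s f)(x) = ∫ f(e^{-s}x + √(1-e^{-2s}) y) e^{-π|y|²} dy. Then the Fisher information with respect to the Gaussian measure satisfies I(P_s f) ≤ e^{-2s} I(f), where I(f) = ∫ |∇f|²/f · e^{-π|x|²} dx. -/
open MeasureTheory

/-- Gaussian weight e^{-π|x|²} on ℝ^d. -/
noncomputable def gaussW {d : ℕ} (x : Fin d → ℝ) : ℝ :=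
  Real.exp (-Real.pi * ∑ i, x i ^ 2)

/-- The gradient of f at x (componentwise derivative). -/
noncomputable def grad {d : ℕ} (f : (Fin d → ℝ) → ℝ) (x : Fin d → ℝ) : Fin d → ℝ :=
  fun i => fderiv ℝ f x (Pi.single i 1)

/-- Fisher information with respect to the Gaussian measure e^{-π|x|²}dx. -/
noncomputable def info {d : ℕ} (f : (Fin d → ℝ) → ℝ) : ℝ :=
  ∫ x : Fin d → ℝ, (∑ i, grad f x i ^ 2) / f x * gaussW x

/-- Entropy with respect to the Gaussian measure e^{-π|x|²}dx. -/
noncomputable def ent {d : ℕ} (f : (Fin d → ℝ) → ℝ) : ℝ :=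
  ∫ x : Fin d → ℝ, f x * Real.log (f x) * gaussW x

/-- The Ornstein–Uhlenbeck semigroup (Mehler formula). -/
noncomputable def ouSg {d : ℕ} (s : ℝ) (f : (Fin d → ℝ) → ℝ) (x : Fin d → ℝ) : ℝ :=
  ∫ y : Fin d → ℝ,
    f (fun i => Real.exp (-s) * x i + Real.sqrt (1 - Real.exp (-2 * s)) * y i) * gaussW y


open Real Filter Set

namespace OUaux

/-- quadratic sum -/
noncomputable def Q {d : ℕ} (v : Fin d → ℝ) : ℝ := ∑ i, v i ^ 2

theorem Q_nonneg {d : ℕ} (v : Fin d → ℝ) : 0 ≤ Q v :=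
  Finset.sum_nonneg fun i _ => sq_nonneg _

theorem sq_sqrtQ {d : ℕ} (v : Fin d → ℝ) : Real.sqrt (Q v) ^ 2 = Q v :=
  Real.sq_sqrt (Q_nonneg v)

theorem abs_le_sqrtQ {d : ℕ} (v : Fin d → ℝ) (i : Fin d) : |v i| ≤ Real.sqrt (Q v) := by
  rw [← Real.sqrt_sq_eq_abs]
  exact Real.sqrt_le_sqrt (Finset.single_le_sum (f := fun j => v j ^ 2)
    (fun j _ => sq_nonneg _) (Finset.mem_univ i))

theorem sum_mul_le_sqrtQ {d : ℕ} (x z : Fin d → ℝ) :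
    ∑ i, x i * z i ≤ Real.sqrt (Q x) * Real.sqrt (Q z) := by
  have h := Finset.sum_mul_sq_le_sq_mul_sq Finset.univ x z
  have h2 : ∑ i, x i * z i ≤ |∑ i, x i * z i| := le_abs_self _
  refine h2.trans ?_
  rw [← Real.sqrt_sq_eq_abs, ← Real.sqrt_mul (Q_nonneg x)]
  exact Real.sqrt_le_sqrt h

theorem quad_lower {d : ℕ} (a : ℝ) (ha : 0 ≤ a) (x z : Fin d → ℝ) :
    Q z - 2 * a * (Real.sqrt (Q x) * Real.sqrt (Q z)) ≤ ∑ i, (z i - a * x i) ^ 2 := by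
  have hexp : ∑ i, (z i - a * x i) ^ 2
      = Q z - 2 * a * (∑ i, x i * z i) + a ^ 2 * Q x := by
    simp only [Q, Finset.mul_sum, ← Finset.sum_add_distrib, ← Finset.sum_sub_distrib]
    exact Finset.sum_congr rfl fun i _ => by ring
  rw [hexp]
  have h1 : 2 * a * (∑ i, x i * z i) ≤ 2 * a * (Real.sqrt (Q x) * Real.sqrt (Q z)) := by
    apply mul_le_mul_of_nonneg_left (sum_mul_le_sqrtQ x z) (by positivity)
  nlinarith [sq_nonneg a, Q_nonneg x, mul_nonneg (sq_nonneg a) (Q_nonneg x)]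

theorem sqrtQ_le {d : ℕ} (x : Fin d → ℝ) : Real.sqrt (Q x) ≤ Real.sqrt d * ‖x‖ := by
  have h : Q x ≤ d * ‖x‖ ^ 2 := by
    have : ∀ i, x i ^ 2 ≤ ‖x‖ ^ 2 := fun i => by
      have := norm_le_pi_norm x i
      have h0 : |x i| ≤ ‖x‖ := by simpa [Real.norm_eq_abs] using this
      nlinarith [abs_nonneg (x i), norm_nonneg x, sq_abs (x i)]
    calc Q x = ∑ i : Fin d, x i ^ 2 := rfl
      _ ≤ ∑ _i : Fin d, ‖x‖ ^ 2 := Finset.sum_le_sum fun i _ => this i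
      _ = d * ‖x‖ ^ 2 := by simp [Finset.sum_const, mul_comm]
  calc Real.sqrt (Q x) ≤ Real.sqrt (d * ‖x‖ ^ 2) := Real.sqrt_le_sqrt h
    _ = Real.sqrt d * ‖x‖ := by
        rw [Real.sqrt_mul (Nat.cast_nonneg d), Real.sqrt_sq (norm_nonneg x)]

theorem exp_quad_le (δ β t : ℝ) (hδ : 0 < δ) :
    Real.exp (β * t - δ * t ^ 2) ≤ Real.exp (β ^ 2 / (4 * δ)) := by
  apply Real.exp_le_exp.2
  rw [le_div_iff₀ (by positivity)]
  nlinarith [sq_nonneg (β - 2 * δ * t)]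

theorem lin_exp_quad_le (δ β M t : ℝ) (hδ : 0 < δ) (hM : 0 ≤ M) (ht : 0 ≤ t) :
    (t + M) * Real.exp (β * t - δ * t ^ 2)
      ≤ Real.exp (M + (β + 1) ^ 2 / (4 * δ)) := by
  have h1 : t + M ≤ Real.exp (t + M) := by
    have := Real.add_one_le_exp (t + M)
    linarith
  calc (t + M) * Real.exp (β * t - δ * t ^ 2)
      ≤ Real.exp (t + M) * Real.exp (β * t - δ * t ^ 2) :=
        mul_le_mul_of_nonneg_right h1 (Real.exp_nonneg _)
    _ = Real.exp (M + ((β + 1) * t - δ * t ^ 2)) := by rw [← Real.exp_add]; ring_nf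
    _ ≤ Real.exp (M + (β + 1) ^ 2 / (4 * δ)) := by
        rw [Real.exp_add, Real.exp_add]
        exact mul_le_mul_of_nonneg_left (exp_quad_le δ (β + 1) t hδ) (Real.exp_nonneg _)

/-- gaussW in terms of Q -/
theorem gaussW_eq {d : ℕ} (x : Fin d → ℝ) : gaussW x = Real.exp (-π * Q x) := rfl

theorem gaussW_pos {d : ℕ} (x : Fin d → ℝ) : 0 < gaussW x := Real.exp_pos _

theorem gaussW_prod {d : ℕ} (x : Fin d → ℝ) :
    gaussW x = ∏ i, Real.exp (-π * x i ^ 2) := by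
  rw [gaussW_eq, Q, Finset.mul_sum, Real.exp_sum]

theorem integrable_gaussW (d : ℕ) : Integrable (gaussW (d := d)) := by
  have : (gaussW (d := d)) = fun x => ∏ i, Real.exp (-π * x i ^ 2) :=
    funext fun x => gaussW_prod x
  rw [this]
  exact Integrable.fin_nat_prod fun i => integrable_exp_neg_mul_sq Real.pi_pos

theorem integral_gaussW (d : ℕ) : ∫ x : Fin d → ℝ, gaussW x = 1 := by
  have : (fun x : Fin d → ℝ => gaussW x) = fun x => ∏ i, Real.exp (-π * x i ^ 2) :=
    funext fun x => gaussW_prod x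
  rw [this, MeasureTheory.integral_fintype_prod_volume_eq_prod
    (f := fun (_ : Fin d) (t : ℝ) => Real.exp (-π * t ^ 2))]
  have h1 : (∫ t : ℝ, Real.exp (-π * t ^ 2)) = 1 := by
    rw [integral_gaussian, div_self Real.pi_ne_zero, Real.sqrt_one]
  rw [Finset.prod_congr rfl fun i _ => h1, Finset.prod_const_one]

theorem continuous_gaussW {d : ℕ} : Continuous (gaussW (d := d)) := by
  have h : Continuous fun x : Fin d → ℝ => -Real.pi * ∑ i, x i ^ 2 :=
    continuous_const.mul (continuous_finset_sum _ fun i _ => (continuous_apply i).pow 2)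
  exact Real.continuous_exp.comp h

end OUaux

namespace OUaux

noncomputable def kern (a c : ℝ) {d : ℕ} (x z : Fin d → ℝ) : ℝ :=
  Real.exp (-(π / c ^ 2) * ∑ i, (z i - a * x i) ^ 2)

theorem kern_pos (a c : ℝ) {d : ℕ} (x z : Fin d → ℝ) : 0 < kern a c x z := Real.exp_pos _

theorem kern_le_one (a c : ℝ) (hc : 0 < c) {d : ℕ} (x z : Fin d → ℝ) :
    kern a c x z ≤ 1 := by
  rw [kern, ← Real.exp_zero]
  apply Real.exp_le_exp.2
  have h1 : 0 ≤ ∑ i, (z i - a * x i) ^ 2 := Finset.sum_nonneg fun i _ => sq_nonneg _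
  have h2 : 0 ≤ π / c ^ 2 := by positivity
  nlinarith

theorem continuous_kern (a c : ℝ) {d : ℕ} :
    Continuous (fun p : (Fin d → ℝ) × (Fin d → ℝ) => kern a c p.1 p.2) := by
  have h : Continuous fun p : (Fin d → ℝ) × (Fin d → ℝ) =>
      -(π / c ^ 2) * ∑ i, (p.2 i - a * p.1 i) ^ 2 := by
    apply continuous_const.mul
    apply continuous_finset_sum _ fun i _ => ?_
    exact (((continuous_apply i).comp continuous_snd).sub
      (continuous_const.mul ((continuous_apply i).comp continuous_fst))).pow 2
  exact Real.continuous_exp.comp h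

theorem continuous_kern_right (a c : ℝ) {d : ℕ} (x : Fin d → ℝ) :
    Continuous (fun z : Fin d → ℝ => kern a c x z) := by
  have h : Continuous fun z : Fin d → ℝ =>
      -(π / c ^ 2) * ∑ i, (z i - a * x i) ^ 2 := by
    apply continuous_const.mul
    exact continuous_finset_sum _ fun i _ =>
      ((continuous_apply i).sub continuous_const).pow 2
  exact Real.continuous_exp.comp h

theorem continuous_kern_left (a c : ℝ) {d : ℕ} (z : Fin d → ℝ) :
    Continuous (fun x : Fin d → ℝ => kern a c x z) := by
  have h : Continuous fun x : Fin d → ℝ =>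
      -(π / c ^ 2) * ∑ i, (z i - a * x i) ^ 2 := by
    apply continuous_const.mul
    exact continuous_finset_sum _ fun i _ =>
      (continuous_const.sub (continuous_const.mul (continuous_apply i))).pow 2
  exact Real.continuous_exp.comp h

/-- master bound : for `√(Q x) ≤ M`, the kernel (also with a linear factor) is
dominated by a constant multiple of the Gaussian. -/
theorem kern_bound (a c : ℝ) (ha : 0 < a) (hc : 0 < c) (hac : a ^ 2 + c ^ 2 = 1)
    {d : ℕ} (M : ℝ) (hM : 0 ≤ M) :
    ∃ C : ℝ, 0 < C ∧ ∀ (x z : Fin d → ℝ), Real.sqrt (Q x) ≤ M →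
      kern a c x z ≤ C * gaussW z ∧
      (Real.sqrt (Q z) + a * M) * kern a c x z ≤ C * gaussW z := by
  have hc2 : (0:ℝ) < c ^ 2 := by positivity
  set δ : ℝ := π * a ^ 2 / c ^ 2 with hδdef
  have hδ : 0 < δ := by positivity
  set β : ℝ := 2 * π * a * M / c ^ 2 with hβdef
  have hβ : 0 ≤ β := by positivity
  refine ⟨Real.exp (β ^ 2 / (4 * δ)) + Real.exp (a * M + (β + 1) ^ 2 / (4 * δ)),
    by positivity, fun x z hx => ?_⟩
  set t : ℝ := Real.sqrt (Q z) with htdef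
  have ht : 0 ≤ t := Real.sqrt_nonneg _
  have ht2 : t ^ 2 = Q z := sq_sqrtQ z
  -- kern ≤ gaussW z * exp (β t - δ t²)
  have hkey : kern a c x z ≤ gaussW z * Real.exp (β * t - δ * t ^ 2) := by
    rw [kern, gaussW_eq, ← Real.exp_add]
    apply Real.exp_le_exp.2
    have h1 : Q z - 2 * a * (Real.sqrt (Q x) * t) ≤ ∑ i, (z i - a * x i) ^ 2 :=
      quad_lower a ha.le x z
    have h2 : Q z - 2 * a * (M * t) ≤ ∑ i, (z i - a * x i) ^ 2 := by
      refine le_trans ?_ h1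
      have := mul_le_mul_of_nonneg_right hx ht
      nlinarith
    have h3 : -(π / c ^ 2) * ∑ i, (z i - a * x i) ^ 2
        ≤ -(π / c ^ 2) * (Q z - 2 * a * (M * t)) := by
      exact mul_le_mul_of_nonpos_left h2 (neg_nonpos.2 (by positivity))
    refine h3.trans (le_of_eq ?_)
    have hc2' : c ^ 2 ≠ 0 := ne_of_gt hc2
    have hc2eq : c ^ 2 = 1 - a ^ 2 := by linarith
    have h1a : (1:ℝ) - a ^ 2 ≠ 0 := by rw [← hc2eq]; positivity
    rw [← ht2, hβdef, hδdef, hc2eq]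
    field_simp
    ring
  constructor
  · calc kern a c x z ≤ gaussW z * Real.exp (β * t - δ * t ^ 2) := hkey
      _ ≤ gaussW z * Real.exp (β ^ 2 / (4 * δ)) :=
          mul_le_mul_of_nonneg_left (exp_quad_le δ β t hδ) (gaussW_pos z).le
      _ ≤ (Real.exp (β ^ 2 / (4 * δ)) + Real.exp (a * M + (β + 1) ^ 2 / (4 * δ))) * gaussW z := by
          rw [mul_comm]
          apply mul_le_mul_of_nonneg_right _ (gaussW_pos z).le
          nlinarith [Real.exp_pos (a * M + (β + 1) ^ 2 / (4 * δ))]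
  · calc (t + a * M) * kern a c x z
        ≤ (t + a * M) * (gaussW z * Real.exp (β * t - δ * t ^ 2)) := by
          apply mul_le_mul_of_nonneg_left hkey (by positivity)
      _ = gaussW z * ((t + a * M) * Real.exp (β * t - δ * t ^ 2)) := by ring
      _ ≤ gaussW z * Real.exp (a * M + (β + 1) ^ 2 / (4 * δ)) := by
          apply mul_le_mul_of_nonneg_left
            (lin_exp_quad_le δ β (a * M) t hδ (by positivity) ht) (gaussW_pos z).le
      _ ≤ (Real.exp (β ^ 2 / (4 * δ)) + Real.exp (a * M + (β + 1) ^ 2 / (4 * δ))) * gaussW z := by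
          rw [mul_comm]
          apply mul_le_mul_of_nonneg_right _ (gaussW_pos z).le
          nlinarith [Real.exp_pos (β ^ 2 / (4 * δ))]

set_option maxHeartbeats 1000000 in
/-- change of variables `z = a•x + c•y` -/
theorem integral_comp_affine {d : ℕ} (a c : ℝ) (hc : 0 < c) (x : Fin d → ℝ)
    (u : (Fin d → ℝ) → ℝ) :
    ∫ y : Fin d → ℝ, u (fun i => a * x i + c * y i) = (c ^ d)⁻¹ * ∫ z, u z := by
  have h1 : (fun y : Fin d → ℝ => u (fun i => a * x i + c * y i))
      = fun y => (fun w => u (w + a • x)) (c • y) := by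
    funext y
    congr 1
    funext i
    simp [Pi.smul_apply, smul_eq_mul]
    ring
  rw [h1, MeasureTheory.Measure.integral_comp_smul volume (fun w => u (w + a • x)) c,
    integral_add_right_eq_self (μ := volume) (fun w => u w) (a • x)]
  have hrank : Module.finrank ℝ (Fin d → ℝ) = d := by
    simp [Module.finrank_fintype_fun_eq_card]
  rw [hrank, smul_eq_mul, abs_of_nonneg (by positivity)]

theorem kern_affine (a c : ℝ) (hc : 0 < c) {d : ℕ} (x y : Fin d → ℝ) :
    kern a c x (fun i => a * x i + c * y i) = gaussW y := by
  rw [kern, gaussW_eq]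
  congr 1
  have h : ∑ i, (a * x i + c * y i - a * x i) ^ 2 = c ^ 2 * Q y := by
    rw [Q, Finset.mul_sum]
    exact Finset.sum_congr rfl fun i _ => by ring
  rw [h]
  have hc2' : c ^ 2 ≠ 0 := by positivity
  field_simp

/-- the Mehler-form integral equals the kernel-form integral -/
theorem mehler_eq_kernel {d : ℕ} (a c : ℝ) (hc : 0 < c) (f : (Fin d → ℝ) → ℝ) (x : Fin d → ℝ) :
    ∫ y : Fin d → ℝ, f (fun i => a * x i + c * y i) * gaussW y
      = (c ^ d)⁻¹ * ∫ z, f z * kern a c x z := by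
  rw [← integral_comp_affine a c hc x (fun z => f z * kern a c x z)]
  congr 1
  funext y
  rw [kern_affine a c hc x y]

/-- Gaussian marginal identity: ∫ kern(x,z) γ(x) dx = c^d γ(z). -/
theorem kern_marginal (a c : ℝ) (ha : 0 < a) (hc : 0 < c) (hac : a ^ 2 + c ^ 2 = 1)
    {d : ℕ} (z : Fin d → ℝ) :
    ∫ x : Fin d → ℝ, kern a c x z * gaussW x = c ^ d * gaussW z := by
  have hc2 : c ^ 2 = 1 - a ^ 2 := by linarith
  have hc2pos : (0:ℝ) < c ^ 2 := by positivity
  have key : ∀ t zi : ℝ, -(π / c ^ 2) * (zi - a * t) ^ 2 + -π * t ^ 2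
      = -π * zi ^ 2 + -(π / c ^ 2) * (t - a * zi) ^ 2 := by
    intro t zi
    rw [hc2]
    have h1a : (1:ℝ) - a ^ 2 ≠ 0 := by rw [← hc2]; exact ne_of_gt hc2pos
    field_simp
    ring
  have hrw : (fun x : Fin d → ℝ => kern a c x z * gaussW x)
      = fun x => ∏ i, (Real.exp (-π * z i ^ 2) *
          Real.exp (-(π / c ^ 2) * (x i - a * z i) ^ 2)) := by
    funext x
    rw [kern, gaussW_eq, Q, ← Real.exp_add, Finset.mul_sum, Finset.mul_sum,
      ← Finset.sum_add_distrib]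
    rw [Finset.prod_congr rfl fun i _ => (Real.exp_add _ _).symm, ← Real.exp_sum]
    congr 1
    exact Finset.sum_congr rfl fun i _ => key (x i) (z i)
  rw [hrw, MeasureTheory.integral_fintype_prod_volume_eq_prod
    (f := fun (i : Fin d) (t : ℝ) => Real.exp (-π * z i ^ 2) *
      Real.exp (-(π / c ^ 2) * (t - a * z i) ^ 2))]
  have hone : ∀ i : Fin d,
      (∫ t : ℝ, Real.exp (-π * z i ^ 2) * Real.exp (-(π / c ^ 2) * (t - a * z i) ^ 2))
        = Real.exp (-π * z i ^ 2) * c := by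
    intro i
    rw [MeasureTheory.integral_const_mul]
    congr 1
    have := integral_sub_right_eq_self (μ := volume)
      (fun u : ℝ => Real.exp (-(π / c ^ 2) * u ^ 2)) (a * z i)
    rw [this, integral_gaussian]
    rw [show π / (π / c ^ 2) = c ^ 2 by field_simp]
    exact Real.sqrt_sq hc.le
  rw [Finset.prod_congr rfl fun i _ => hone i, Finset.prod_mul_distrib,
    Finset.prod_const, Finset.card_univ, Fintype.card_fin]
  rw [(gaussW_prod z).symm]
  ring

end OUaux

namespace OUaux

theorem limit_eq_zero_of_integrable_atTop (g : ℝ → ℝ) (hgi : Integrable g) {L : ℝ}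
    (hL : Tendsto g atTop (nhds L)) : L = 0 := by
  by_contra hne
  have hev : ∀ᶠ t in atTop, |L| / 2 ≤ ‖g t‖ := by
    have h1 : ∀ᶠ t in atTop, |g t - L| < |L| / 2 := by
      have := Metric.tendsto_nhds.mp hL (|L| / 2) (by positivity)
      simpa [Real.dist_eq] using this
    filter_upwards [h1] with t ht
    have h3 : |L| - |g t - L| ≤ |g t| := by
      have h4 := abs_sub_abs_le_abs_sub L (g t)
      rw [abs_sub_comm] at h4
      linarith
    rw [Real.norm_eq_abs]
    linarith
  obtain ⟨T, hT⟩ := hev.exists_forall_of_atTop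
  have hconst : Integrable (fun _ : ℝ => |L| / 2) (volume.restrict (Ici T)) := by
    apply Integrable.mono (hgi.restrict (s := Ici T)) aestronglyMeasurable_const
    rw [ae_restrict_iff' measurableSet_Ici]
    filter_upwards with t ht
    have : |L| / 2 ≤ ‖g t‖ := hT t ht
    rw [Real.norm_eq_abs, abs_of_nonneg (by positivity : (0:ℝ) ≤ |L| / 2)]
    exact this
  rw [integrable_const_iff] at hconst
  rcases hconst with h | h
  · exact hne (by simpa using abs_eq_zero.mp (by linarith [abs_nonneg L, h] : |L| = 0))
  · have h := h.measure_univ_lt_top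
    rw [Measure.restrict_apply_univ, Real.volume_Ici] at h
    exact (lt_irrefl _ h).elim

theorem limit_eq_zero_of_integrable_atBot (g : ℝ → ℝ) (hgi : Integrable g) {L : ℝ}
    (hL : Tendsto g atBot (nhds L)) : L = 0 := by
  apply limit_eq_zero_of_integrable_atTop (fun t => g (-t))
  · have h := (integrable_comp_smul_iff volume g (by norm_num : (-1:ℝ) ≠ 0)).mpr hgi
    simpa using h
  · exact hL.comp tendsto_neg_atTop_atBot

/-- If `g` is everywhere differentiable with derivative `g'`, and both `g` and `g'`
are integrable on `ℝ`, then `∫ g' = 0`. -/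
theorem integral_deriv_eq_zero (g g' : ℝ → ℝ) (hg : ∀ t, HasDerivAt g (g' t) t)
    (hgi : Integrable g) (hg'i : Integrable g') : ∫ t, g' t = 0 := by
  have hsub : ∀ T₁ T₂ : ℝ, ∫ t in T₁..T₂, g' t = g T₂ - g T₁ := fun T₁ T₂ =>
    intervalIntegral.integral_eq_sub_of_hasDerivAt (fun t _ => hg t)
      hg'i.intervalIntegrable
  -- limit at +∞
  have htop : Tendsto g atTop (nhds (g 0 + ∫ t in Ioi 0, g' t)) := by
    have h1 : Tendsto (fun T => ∫ t in (0:ℝ)..T, g' t) atTop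
        (nhds (∫ t in Ioi 0, g' t)) :=
      intervalIntegral_tendsto_integral_Ioi 0 hg'i.integrableOn tendsto_id
    have h2 : Tendsto (fun T => g 0 + ∫ t in (0:ℝ)..T, g' t) atTop
        (nhds (g 0 + ∫ t in Ioi 0, g' t)) := tendsto_const_nhds.add h1
    refine h2.congr fun T => ?_
    rw [hsub 0 T]; ring
  have hbot : Tendsto g atBot (nhds (g 0 - ∫ t in Iic 0, g' t)) := by
    have h1 : Tendsto (fun T => ∫ t in T..(0:ℝ), g' t) atBot
        (nhds (∫ t in Iic 0, g' t)) :=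
      intervalIntegral_tendsto_integral_Iic 0 hg'i.integrableOn tendsto_id
    have h2 : Tendsto (fun T => g 0 - ∫ t in T..(0:ℝ), g' t) atBot
        (nhds (g 0 - ∫ t in Iic 0, g' t)) := tendsto_const_nhds.sub h1
    refine h2.congr fun T => ?_
    rw [hsub T 0]; ring
  have h3 : g 0 + ∫ t in Ioi 0, g' t = 0 := limit_eq_zero_of_integrable_atTop g hgi htop
  have h4 : g 0 - ∫ t in Iic 0, g' t = 0 := limit_eq_zero_of_integrable_atBot g hgi hbot
  have h5 := intervalIntegral.integral_Iic_add_Ioi (b := (0:ℝ))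
    hg'i.integrableOn hg'i.integrableOn
  rw [← h5]
  linarith

/-- `Fin.insertNth` as an affine path in the `i`-th coordinate. -/
theorem insertNth_eq_add_smul {n : ℕ} (i : Fin (n + 1)) (t : ℝ) (w : Fin n → ℝ) :
    (i.insertNth t w : Fin (n + 1) → ℝ)
      = (i.insertNth 0 w : Fin (n + 1) → ℝ) + t • (Pi.single i 1 : Fin (n + 1) → ℝ) := by
  funext j
  refine Fin.succAboveCases i ?_ ?_ j
  · simp
  · intro m
    simp [Fin.insertNth_apply_succAbove, Pi.single_eq_of_ne (Fin.succAbove_ne i m)]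

theorem hasDerivAt_insertNth {n : ℕ} (i : Fin (n + 1)) (t : ℝ) (w : Fin n → ℝ) :
    HasDerivAt (fun s : ℝ => (i.insertNth s w : Fin (n + 1) → ℝ))
      ((Pi.single i 1 : Fin (n + 1) → ℝ)) t := by
  have h1 : (fun s : ℝ => (i.insertNth s w : Fin (n + 1) → ℝ))
      = fun s : ℝ => (i.insertNth 0 w : Fin (n + 1) → ℝ)
        + s • (Pi.single i 1 : Fin (n+1) → ℝ) :=
    funext fun s => insertNth_eq_add_smul i s w
  rw [h1]
  simpa using ((hasDerivAt_id t).smul_const (Pi.single i 1 : Fin (n+1) → ℝ)).const_add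
    (i.insertNth 0 w : Fin (n + 1) → ℝ)

/-- Integration by parts on `ℝ^{n+1}`: integral of an `i`-th partial derivative vanishes. -/
theorem integral_pderiv_eq_zero {n : ℕ} (H : (Fin (n + 1) → ℝ) → ℝ)
    (hH : Differentiable ℝ H) (i : Fin (n + 1))
    (h1 : Integrable H) (h2 : Integrable (fun z => fderiv ℝ H z (Pi.single i 1))) :
    ∫ z, fderiv ℝ H z (Pi.single i 1) = 0 := by
  set e := MeasurableEquiv.piFinSuccAbove (fun _ : Fin (n + 1) => ℝ) i
  have mp : MeasurePreserving e volume volume :=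
    MeasureTheory.volume_preserving_piFinSuccAbove (fun _ : Fin (n + 1) => ℝ) i
  have mps : MeasurePreserving e.symm volume volume := mp.symm e
  set D : (Fin (n + 1) → ℝ) → ℝ := fun z => fderiv ℝ H z (Pi.single i 1) with hD
  have hcomp : ∫ z, D z = ∫ p : ℝ × (Fin n → ℝ), D (e.symm p) :=
    (mps.integral_comp e.symm.measurableEmbedding D).symm
  have hDint : Integrable (fun p : ℝ × (Fin n → ℝ) => D (e.symm p)) :=
    (mps.integrable_comp_emb e.symm.measurableEmbedding).mpr h2
  have hHint : Integrable (fun p : ℝ × (Fin n → ℝ) => H (e.symm p)) :=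
    (mps.integrable_comp_emb e.symm.measurableEmbedding).mpr h1
  have hsymm : ∀ (t : ℝ) (w : Fin n → ℝ), e.symm (t, w) = i.insertNth t w := fun t w => rfl
  rw [hcomp]
  have hDint' : Integrable (fun p : ℝ × (Fin n → ℝ) => D (e.symm p))
      ((volume : Measure ℝ).prod (volume : Measure (Fin n → ℝ))) := hDint
  have hHint' : Integrable (fun p : ℝ × (Fin n → ℝ) => H (e.symm p))
      ((volume : Measure ℝ).prod (volume : Measure (Fin n → ℝ))) := hHint
  have hswap : (∫ p : ℝ × (Fin n → ℝ), D (e.symm p))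
      = ∫ w : Fin n → ℝ, ∫ t : ℝ, D (e.symm (t, w)) :=
    MeasureTheory.integral_prod_symm (fun p : ℝ × (Fin n → ℝ) => D (e.symm p)) hDint'
  rw [hswap]
  -- a.e. slices are integrable
  have hae1 := hDint'.prod_left_ae
  have hae2 := hHint'.prod_left_ae
  have : ∀ᵐ w : Fin n → ℝ, (∫ t : ℝ, D (e.symm (t, w))) = 0 := by
    filter_upwards [hae1, hae2] with w hw1 hw2
    apply integral_deriv_eq_zero (fun t => H (e.symm (t, w))) (fun t => D (e.symm (t, w)))
      _ hw2 hw1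
    intro t
    have hpath : HasDerivAt (fun s : ℝ => (i.insertNth s w : Fin (n + 1) → ℝ))
        ((Pi.single i 1 : Fin (n + 1) → ℝ)) t := hasDerivAt_insertNth i t w
    have := (hH (i.insertNth t w)).hasFDerivAt.comp_hasDerivAt t hpath
    exact this
  rw [integral_congr_ae this, integral_zero]

end OUaux

namespace OUaux

/-- Cauchy–Schwarz : `(∫ u w)² ≤ (∫ u²/v w) (∫ v w)` for `v > 0`, `w ≥ 0`. -/
theorem integral_sq_le {α : Type*} [MeasurableSpace α] (μ : Measure α)
    (u v w : α → ℝ) (hw : ∀ x, 0 ≤ w x) (hv : ∀ x, 0 < v x)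
    (h1 : Integrable (fun x => u x * w x) μ)
    (h2 : Integrable (fun x => u x ^ 2 / v x * w x) μ)
    (h3 : Integrable (fun x => v x * w x) μ) :
    (∫ x, u x * w x ∂μ) ^ 2
      ≤ (∫ x, u x ^ 2 / v x * w x ∂μ) * ∫ x, v x * w x ∂μ := by
  set I := ∫ x, u x * w x ∂μ
  set A := ∫ x, u x ^ 2 / v x * w x ∂μ
  set B := ∫ x, v x * w x ∂μ
  have hA : 0 ≤ A := integral_nonneg fun x =>
    mul_nonneg (div_nonneg (sq_nonneg _) (hv x).le) (hw x)
  have hB : 0 ≤ B := integral_nonneg fun x => mul_nonneg (hv x).le (hw x)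
  have key : ∀ t : ℝ, 0 < t → 2 * t * |I| ≤ A + t ^ 2 * B := by
    intro t ht
    have habs : |I| ≤ ∫ x, |u x * w x| ∂μ := by
      have h := norm_integral_le_integral_norm (μ := μ) (fun x => u x * w x)
      simpa only [Real.norm_eq_abs] using h
    have hpt : ∀ x, 2 * t * |u x * w x| ≤ u x ^ 2 / v x * w x + t ^ 2 * (v x * w x) := by
      intro x
      have hvx := hv x
      have hwx := hw x
      have hsq : 0 ≤ (|u x| - t * v x) ^ 2 := sq_nonneg _
      have h2t : 2 * t * |u x| * v x ≤ u x ^ 2 + t ^ 2 * v x ^ 2 := by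
        nlinarith [sq_abs (u x)]
      have hdiv : 2 * t * |u x| ≤ u x ^ 2 / v x + t ^ 2 * v x := by
        rw [div_add' _ _ _ (ne_of_gt hvx), le_div_iff₀ hvx]
        nlinarith
      have habs2 : |u x * w x| = |u x| * w x := by
        rw [abs_mul, abs_of_nonneg hwx]
      rw [habs2]
      calc 2 * t * (|u x| * w x) = (2 * t * |u x|) * w x := by ring
        _ ≤ (u x ^ 2 / v x + t ^ 2 * v x) * w x :=
            mul_le_mul_of_nonneg_right hdiv hwx
        _ = u x ^ 2 / v x * w x + t ^ 2 * (v x * w x) := by ring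
    have hi1 : Integrable (fun x => u x ^ 2 / v x * w x + t ^ 2 * (v x * w x)) μ :=
      h2.add (h3.const_mul _)
    have hint2 := integral_mono_of_nonneg
      (f := fun x => 2 * t * |u x * w x|)
      (g := fun x => u x ^ 2 / v x * w x + t ^ 2 * (v x * w x))
      (Eventually.of_forall fun x => by positivity) hi1
      (Eventually.of_forall hpt)
    calc 2 * t * |I| ≤ 2 * t * ∫ x, |u x * w x| ∂μ := by
          apply mul_le_mul_of_nonneg_left habs (by positivity)
      _ = ∫ x, 2 * t * |u x * w x| ∂μ := (MeasureTheory.integral_const_mul _ _).symm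
      _ ≤ ∫ x, (u x ^ 2 / v x * w x + t ^ 2 * (v x * w x)) ∂μ := hint2
      _ = A + t ^ 2 * B := by
          rw [integral_add h2 (h3.const_mul _), MeasureTheory.integral_const_mul]
  rcases eq_or_lt_of_le hB with hB0 | hBpos
  · -- B = 0 : show I = 0
    have hI0 : I = 0 := by
      by_contra hne
      have hIpos : 0 < |I| := abs_pos.mpr hne
      have h := key ((A + 1) / (2 * |I|)) (by positivity)
      have heq : 2 * ((A + 1) / (2 * |I|)) * |I| = A + 1 := by
        field_simp
      rw [heq, ← hB0, mul_zero, add_zero] at h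
      linarith
    rw [hI0, ← hB0]
    simp
  · -- B > 0
    rcases eq_or_ne I 0 with hI0 | hIne
    · rw [hI0]
      simpa using mul_nonneg hA hB
    · have hIpos : 0 < |I| := abs_pos.mpr hIne
      have h := key (|I| / B) (by positivity)
      have heq : 2 * (|I| / B) * |I| = 2 * |I| ^ 2 / B := by ring
      have hBne : B ≠ 0 := ne_of_gt hBpos
      have heq2 : (|I| / B) ^ 2 * B = |I| ^ 2 / B := by
        rw [div_pow]
        field_simp
      rw [heq, heq2] at h
      have h2' : |I| ^ 2 / B ≤ A := by
        have hd : 2 * |I| ^ 2 / B = |I| ^ 2 / B + |I| ^ 2 / B := by ring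
        rw [hd] at h
        linarith
      have := (div_le_iff₀ hBpos).mp h2'
      calc I ^ 2 = |I| ^ 2 := (sq_abs I).symm
        _ ≤ A * B := this

end OUaux

namespace OUaux

noncomputable def prj {d : ℕ} (i : Fin d) : (Fin d → ℝ) →L[ℝ] ℝ := ContinuousLinearMap.proj i

theorem prj_apply {d : ℕ} (i : Fin d) (v : Fin d → ℝ) : prj i v = v i := rfl

theorem norm_prj_le {d : ℕ} (i : Fin d) : ‖(prj i : (Fin d → ℝ) →L[ℝ] ℝ)‖ ≤ 1 :=
  ContinuousLinearMap.opNorm_le_bound _ zero_le_one fun v => by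
    rw [prj_apply, one_mul]
    exact norm_le_pi_norm v i

theorem norm_comb_le {d : ℕ} (r : ℝ) (b : Fin d → ℝ) :
    ‖r • ∑ i, b i • (prj i : (Fin d → ℝ) →L[ℝ] ℝ)‖ ≤ |r| * ∑ i, |b i| := by
  refine (norm_smul_le r (∑ i, b i • (prj i : (Fin d → ℝ) →L[ℝ] ℝ))).trans ?_
  rw [Real.norm_eq_abs]
  apply mul_le_mul_of_nonneg_left _ (abs_nonneg r)
  calc ‖∑ i, b i • (prj i : (Fin d → ℝ) →L[ℝ] ℝ)‖
      ≤ ∑ i, ‖b i • (prj i : (Fin d → ℝ) →L[ℝ] ℝ)‖ := norm_sum_le _ _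
    _ ≤ ∑ i, |b i| := by
        apply Finset.sum_le_sum
        intro i _
        refine (norm_smul_le (b i) (prj i : (Fin d → ℝ) →L[ℝ] ℝ)).trans ?_
        rw [Real.norm_eq_abs]
        calc |b i| * ‖(prj i : (Fin d → ℝ) →L[ℝ] ℝ)‖ ≤ |b i| * 1 :=
              mul_le_mul_of_nonneg_left (norm_prj_le i) (abs_nonneg _)
          _ = |b i| := mul_one _

/-- derivative of the kernel in the `x` variable -/
theorem hasFDerivAt_kern_x (a c : ℝ) {d : ℕ} (z x : Fin d → ℝ) :
    HasFDerivAt (fun x : Fin d → ℝ => kern a c x z)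
      ((kern a c x z * (2 * π * a / c ^ 2)) •
        ∑ i, (z i - a * x i) • (prj i : (Fin d → ℝ) →L[ℝ] ℝ)) x := by
  have hsum : HasFDerivAt (fun x : Fin d → ℝ => ∑ i, (z i - a * x i) ^ 2)
      (∑ i, (2 * (z i - a * x i)) •
        (-(a • (prj i : (Fin d → ℝ) →L[ℝ] ℝ)))) x := by
    apply HasFDerivAt.fun_sum
    intro i _
    have hproj : HasFDerivAt (fun x : Fin d → ℝ => x i)
        (prj i : (Fin d → ℝ) →L[ℝ] ℝ) x := (prj i).hasFDerivAt
    have h1 : HasFDerivAt (fun x : Fin d → ℝ => z i - a * x i)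
        (-(a • (prj i : (Fin d → ℝ) →L[ℝ] ℝ))) x := by
      simpa using (hproj.const_mul a).const_sub (z i)
    have h2 := h1.mul h1
    have h3 : (fun x : Fin d → ℝ => (z i - a * x i) ^ 2)
        = fun x => (z i - a * x i) * (z i - a * x i) := funext fun x => sq (z i - a * x i)
    rw [h3, show (2 * (z i - a * x i)) • (-(a • (prj i : (Fin d → ℝ) →L[ℝ] ℝ)))
      = (z i - a * x i) • (-(a • (prj i : (Fin d → ℝ) →L[ℝ] ℝ)))
        + (z i - a * x i) • (-(a • (prj i : (Fin d → ℝ) →L[ℝ] ℝ)))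
      from by rw [two_mul, add_smul]]
    exact h2
  have hu := hsum.const_mul (-(π / c ^ 2))
  have hexp := hu.exp
  refine hexp.congr_fderiv ?_
  ext v
  simp only [ContinuousLinearMap.smul_apply, ContinuousLinearMap.sum_apply,
    ContinuousLinearMap.neg_apply, smul_eq_mul, prj_apply]
  have hkk : rexp (-(π / c ^ 2) * ∑ i, (z i - a * x i) ^ 2) = kern a c x z := rfl
  rw [hkk]
  have hU : ∑ i, 2 * (z i - a * x i) * -(a * v i)
      = (-2 * a) * ∑ i, (z i - a * x i) * v i := by
    rw [Finset.mul_sum]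
    exact Finset.sum_congr rfl fun i _ => by ring
  rw [hU, Finset.mul_sum, Finset.mul_sum]
  rw [Finset.mul_sum, Finset.mul_sum]
  exact Finset.sum_congr rfl fun i _ => by ring

/-- derivative of the kernel in the `z` variable -/
theorem hasFDerivAt_kern_z (a c : ℝ) {d : ℕ} (x z : Fin d → ℝ) :
    HasFDerivAt (fun z : Fin d → ℝ => kern a c x z)
      ((kern a c x z * (-2 * π / c ^ 2)) •
        ∑ i, (z i - a * x i) • (prj i : (Fin d → ℝ) →L[ℝ] ℝ)) z := by
  have hsum : HasFDerivAt (fun z : Fin d → ℝ => ∑ i, (z i - a * x i) ^ 2)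
      (∑ i, (2 * (z i - a * x i)) • (prj i : (Fin d → ℝ) →L[ℝ] ℝ)) z := by
    apply HasFDerivAt.fun_sum
    intro i _
    have hproj : HasFDerivAt (fun z : Fin d → ℝ => z i)
        (prj i : (Fin d → ℝ) →L[ℝ] ℝ) z := (prj i).hasFDerivAt
    have h1 : HasFDerivAt (fun z : Fin d → ℝ => z i - a * x i)
        (prj i : (Fin d → ℝ) →L[ℝ] ℝ) z := hproj.sub_const (a * x i)
    have h2 := h1.mul h1
    have h3 : (fun z : Fin d → ℝ => (z i - a * x i) ^ 2)
        = fun z => (z i - a * x i) * (z i - a * x i) := funext fun z => sq (z i - a * x i)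
    rw [h3, show (2 * (z i - a * x i)) • (prj i : (Fin d → ℝ) →L[ℝ] ℝ)
      = (z i - a * x i) • (prj i : (Fin d → ℝ) →L[ℝ] ℝ)
        + (z i - a * x i) • (prj i : (Fin d → ℝ) →L[ℝ] ℝ)
      from by rw [two_mul, add_smul]]
    exact h2
  have hu := hsum.const_mul (-(π / c ^ 2))
  have hexp := hu.exp
  refine hexp.congr_fderiv ?_
  ext v
  simp only [ContinuousLinearMap.smul_apply, ContinuousLinearMap.sum_apply,
    smul_eq_mul, prj_apply]
  have hkk : rexp (-(π / c ^ 2) * ∑ i, (z i - a * x i) ^ 2) = kern a c x z := rfl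
  rw [hkk]
  have hU : ∑ i, 2 * (z i - a * x i) * v i
      = (2 : ℝ) * ∑ i, (z i - a * x i) * v i := by
    rw [Finset.mul_sum]
    exact Finset.sum_congr rfl fun i _ => by ring
  rw [hU, Finset.mul_sum, Finset.mul_sum]
  rw [Finset.mul_sum, Finset.mul_sum]
  exact Finset.sum_congr rfl fun i _ => by ring

theorem comb_apply_single {d : ℕ} (b : Fin d → ℝ) (i : Fin d) :
    (∑ j, b j • (prj j : (Fin d → ℝ) →L[ℝ] ℝ)) (Pi.single i 1) = b i := by
  rw [ContinuousLinearMap.sum_apply]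
  rw [Finset.sum_eq_single i]
  · simp [prj_apply]
  · intro j _ hj
    simp [prj_apply, Pi.single_eq_of_ne hj]
  · intro h
    exact absurd (Finset.mem_univ i) h

end OUaux

namespace OUaux

set_option maxHeartbeats 2000000 in
theorem main_aux {n : ℕ} (f : (Fin (n + 1) → ℝ) → ℝ) (hf : ContDiff ℝ (⊤ : ℕ∞) f)
    (hpos : ∀ x, 0 < f x)
    (hfint : Integrable (fun x : Fin (n + 1) → ℝ => f x * gaussW x))
    (hI : Integrable (fun x : Fin (n + 1) → ℝ => (∑ i, grad f x i ^ 2) / f x * gaussW x))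
    (a c : ℝ) (ha : 0 < a) (hc : 0 < c) (hac : a ^ 2 + c ^ 2 = 1) :
    info (fun x => ∫ y : Fin (n + 1) → ℝ,
        f (fun i => a * x i + c * y i) * gaussW y) ≤ a ^ 2 * info f := by
  have hcd : (0:ℝ) < c ^ (n + 1) := pow_pos hc _
  have hc2 : (0:ℝ) < c ^ 2 := by positivity
  -- continuity facts
  have hfc : Continuous f := hf.continuous
  have hgc : ∀ i, Continuous fun z => grad f z i := fun i =>
    (hf.continuous_fderiv (by simp)).clm_apply continuous_const
  set ρ : (Fin (n + 1) → ℝ) → ℝ := fun z => (∑ i, grad f z i ^ 2) / f z with hρdef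
  have hρc : Continuous ρ :=
    (continuous_finset_sum _ fun i _ => (hgc i).pow 2).div hfc fun z => (hpos z).ne'
  have hρ0 : ∀ z, 0 ≤ ρ z := fun z =>
    div_nonneg (Finset.sum_nonneg fun i _ => sq_nonneg _) (hpos z).le
  have hIρ : Integrable (fun z => ρ z * gaussW z) := hI
  -- integrability of the basic kernel-weighted functions
  have hfK : ∀ x, Integrable (fun z => f z * kern a c x z) := by
    intro x
    obtain ⟨C, hC, hCb⟩ := kern_bound a c ha hc hac (d := n + 1)
      (Real.sqrt (Q x)) (Real.sqrt_nonneg _)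
    refine Integrable.mono' (hfint.const_mul C)
      ((hfc.mul (continuous_kern_right a c x)).aestronglyMeasurable) ?_
    filter_upwards with z
    have h1 := (hCb x z le_rfl).1
    rw [Real.norm_eq_abs,
      abs_of_nonneg (mul_nonneg (hpos z).le (kern_pos a c x z).le)]
    calc f z * kern a c x z ≤ f z * (C * gaussW z) :=
          mul_le_mul_of_nonneg_left h1 (hpos z).le
      _ = C * (f z * gaussW z) := by ring
  have hρK : ∀ x, Integrable (fun z => ρ z * kern a c x z) := by
    intro x
    obtain ⟨C, hC, hCb⟩ := kern_bound a c ha hc hac (d := n + 1)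
      (Real.sqrt (Q x)) (Real.sqrt_nonneg _)
    refine Integrable.mono' (hIρ.const_mul C)
      ((hρc.mul (continuous_kern_right a c x)).aestronglyMeasurable) ?_
    filter_upwards with z
    rw [Real.norm_eq_abs, abs_of_nonneg (mul_nonneg (hρ0 z) (kern_pos a c x z).le)]
    calc ρ z * kern a c x z ≤ ρ z * (C * gaussW z) :=
          mul_le_mul_of_nonneg_left (hCb x z le_rfl).1 (hρ0 z)
      _ = C * (ρ z * gaussW z) := by ring
  have hgK2 : ∀ x i, Integrable (fun z => grad f z i ^ 2 / f z * kern a c x z) := by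
    intro x i
    refine Integrable.mono' (hρK x)
      (((((hgc i).pow 2).div hfc fun z => (hpos z).ne').mul
        (continuous_kern_right a c x)).aestronglyMeasurable) ?_
    filter_upwards with z
    have h0 : 0 ≤ grad f z i ^ 2 / f z :=
      div_nonneg (sq_nonneg _) (hpos z).le
    rw [Real.norm_eq_abs, abs_of_nonneg (mul_nonneg h0 (kern_pos a c x z).le)]
    apply mul_le_mul_of_nonneg_right _ (kern_pos a c x z).le
    apply (div_le_div_iff_of_pos_right (hpos z)).mpr
    exact Finset.single_le_sum (f := fun j => grad f z j ^ 2)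
      (fun j _ => sq_nonneg _) (Finset.mem_univ i)
  have hgK : ∀ x i, Integrable (fun z => grad f z i * kern a c x z) := by
    intro x i
    refine Integrable.mono' (((hgK2 x i).add (hfK x)).const_mul (1/2))
      (((hgc i).mul (continuous_kern_right a c x)).aestronglyMeasurable) ?_
    filter_upwards with z
    rw [Real.norm_eq_abs, abs_mul, abs_of_nonneg (kern_pos a c x z).le]
    have hfz := hpos z
    have hAM : |grad f z i| ≤ (grad f z i ^ 2 / f z + f z) / 2 := by
      rw [le_div_iff₀ (by norm_num : (0:ℝ) < 2), div_add' _ _ _ (ne_of_gt hfz),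
        le_div_iff₀ hfz]
      nlinarith [sq_nonneg (|grad f z i| - f z), sq_abs (grad f z i)]
    calc |grad f z i| * kern a c x z
        ≤ ((grad f z i ^ 2 / f z + f z) / 2) * kern a c x z :=
          mul_le_mul_of_nonneg_right hAM (kern_pos a c x z).le
      _ = 1/2 * (grad f z i ^ 2 / f z * kern a c x z + f z * kern a c x z) := by ring
  have hlinK : ∀ x i, Integrable (fun z => f z * ((z i - a * x i) * kern a c x z)) := by
    intro x i
    obtain ⟨C, hC, hCb⟩ := kern_bound a c ha hc hac (d := n + 1)
      (Real.sqrt (Q x)) (Real.sqrt_nonneg _)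
    refine Integrable.mono' (hfint.const_mul C)
      ((hfc.mul ((((continuous_apply i).sub continuous_const)).mul
        (continuous_kern_right a c x))).aestronglyMeasurable) ?_
    filter_upwards with z
    rw [Real.norm_eq_abs, abs_mul, abs_of_nonneg (hpos z).le, abs_mul,
      abs_of_nonneg (kern_pos a c x z).le]
    have habs : |z i - a * x i| ≤ Real.sqrt (Q z) + a * Real.sqrt (Q x) := by
      rw [sub_eq_add_neg]
      refine (abs_add_le _ _).trans ?_
      rw [abs_neg, abs_mul, abs_of_pos ha]
      exact add_le_add (abs_le_sqrtQ z i)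
        (mul_le_mul_of_nonneg_left (abs_le_sqrtQ x i) ha.le)
    calc f z * (|z i - a * x i| * kern a c x z)
        ≤ f z * ((Real.sqrt (Q z) + a * Real.sqrt (Q x)) * kern a c x z) := by
          apply mul_le_mul_of_nonneg_left _ (hpos z).le
          exact mul_le_mul_of_nonneg_right habs (kern_pos a c x z).le
      _ ≤ f z * (C * gaussW z) :=
          mul_le_mul_of_nonneg_left (hCb x z le_rfl).2 (hpos z).le
      _ = C * (f z * gaussW z) := by ring
  -- the derivative candidate
  set K' : (Fin (n + 1) → ℝ) → (Fin (n + 1) → ℝ) → ((Fin (n + 1) → ℝ) →L[ℝ] ℝ) :=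
    fun x z => f z • ((kern a c x z * (2 * π * a / c ^ 2)) •
      ∑ i, (z i - a * x i) • (prj i : (Fin (n + 1) → ℝ) →L[ℝ] ℝ)) with hK'def
  have hK'cont : ∀ x, Continuous fun z => K' x z := by
    intro x
    apply Continuous.smul hfc
    apply Continuous.smul ((continuous_kern_right a c x).mul continuous_const)
    exact continuous_finset_sum _ fun i _ =>
      Continuous.smul ((continuous_apply i).sub continuous_const) continuous_const
  have hK'deriv : ∀ z x, HasFDerivAt (fun x => f z * kern a c x z) (K' x z) x :=
    fun z x => (hasFDerivAt_kern_x a c z x).const_mul (f z)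
  have hK'bound : ∀ x₀ : Fin (n + 1) → ℝ, ∃ C2, 0 < C2 ∧
      ∀ x z, x ∈ Metric.ball x₀ 1 → ‖K' x z‖ ≤ C2 * (f z * gaussW z) := by
    intro x₀
    set M : ℝ := Real.sqrt ((n : ℝ) + 1) * (‖x₀‖ + 1) with hMdef
    have hM0 : 0 ≤ M := mul_nonneg (Real.sqrt_nonneg _) (by positivity)
    obtain ⟨C, hC, hCb⟩ := kern_bound a c ha hc hac (d := n + 1) M hM0
    refine ⟨2 * π * a / c ^ 2 * ((n : ℝ) + 1) * C,
      mul_pos (mul_pos (by positivity) (by positivity)) hC, fun x z hx => ?_⟩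
    have hxM : Real.sqrt (Q x) ≤ M := by
      have h1 : ‖x‖ ≤ ‖x₀‖ + 1 := by
        have h2 : ‖x - x₀‖ < 1 := by
          rw [← dist_eq_norm]
          exact Metric.mem_ball.mp hx
        calc ‖x‖ = ‖x₀ + (x - x₀)‖ := by rw [add_sub_cancel]
          _ ≤ ‖x₀‖ + ‖x - x₀‖ := norm_add_le _ _
          _ ≤ ‖x₀‖ + 1 := by linarith
      have h3 := sqrtQ_le x
      have h4 : (((n + 1 : ℕ) : ℝ)) = (n : ℝ) + 1 := by push_cast; ring
      rw [h4] at h3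
      calc Real.sqrt (Q x) ≤ Real.sqrt ((n : ℝ) + 1) * ‖x‖ := h3
        _ ≤ Real.sqrt ((n : ℝ) + 1) * (‖x₀‖ + 1) :=
            mul_le_mul_of_nonneg_left h1 (Real.sqrt_nonneg _)
    have hterm : ∀ i, |z i - a * x i| ≤ Real.sqrt (Q z) + a * M := by
      intro i
      rw [sub_eq_add_neg]
      refine (abs_add_le _ _).trans ?_
      rw [abs_neg, abs_mul, abs_of_pos ha]
      exact add_le_add (abs_le_sqrtQ z i)
        (mul_le_mul_of_nonneg_left ((abs_le_sqrtQ x i).trans hxM) ha.le)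
    have hsum : ∑ i, |z i - a * x i| ≤ ((n : ℝ) + 1) * (Real.sqrt (Q z) + a * M) := by
      have := Finset.sum_le_card_nsmul Finset.univ (fun i => |z i - a * x i|)
        (Real.sqrt (Q z) + a * M) (fun i _ => hterm i)
      rw [Finset.card_univ, Fintype.card_fin, nsmul_eq_mul] at this
      have h4 : (((n + 1 : ℕ) : ℝ)) = (n : ℝ) + 1 := by push_cast; ring
      rwa [h4] at this
    have hnorm : ‖K' x z‖ ≤ |f z * (kern a c x z * (2 * π * a / c ^ 2))|
        * ∑ i, |z i - a * x i| := by
      have h5 : K' x z = (f z * (kern a c x z * (2 * π * a / c ^ 2))) •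
          ∑ i, (z i - a * x i) • (prj i : (Fin (n + 1) → ℝ) →L[ℝ] ℝ) := by
        show f z • ((kern a c x z * (2 * π * a / c ^ 2)) •
          ∑ i, (z i - a * x i) • (prj i : (Fin (n + 1) → ℝ) →L[ℝ] ℝ)) = _
        rw [smul_smul]
      rw [h5]
      exact norm_comb_le _ _
    have hval : |f z * (kern a c x z * (2 * π * a / c ^ 2))|
        = f z * kern a c x z * (2 * π * a / c ^ 2) := by
      rw [abs_of_nonneg (mul_nonneg (hpos z).le
        (mul_nonneg (kern_pos a c x z).le (by positivity)))]
      ring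
    calc ‖K' x z‖ ≤ |f z * (kern a c x z * (2 * π * a / c ^ 2))|
          * ∑ i, |z i - a * x i| := hnorm
      _ ≤ f z * kern a c x z * (2 * π * a / c ^ 2) *
          (((n : ℝ) + 1) * (Real.sqrt (Q z) + a * M)) := by
          rw [hval]
          apply mul_le_mul_of_nonneg_left hsum
          have := (kern_pos a c x z).le
          have := (hpos z).le
          positivity
      _ = 2 * π * a / c ^ 2 * ((n : ℝ) + 1) *
          (f z * ((Real.sqrt (Q z) + a * M) * kern a c x z)) := by ring
      _ ≤ 2 * π * a / c ^ 2 * ((n : ℝ) + 1) * (f z * (C * gaussW z)) := by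
          apply mul_le_mul_of_nonneg_left _ (by positivity)
          exact mul_le_mul_of_nonneg_left (hCb x z hxM).2 (hpos z).le
      _ = 2 * π * a / c ^ 2 * ((n : ℝ) + 1) * C * (f z * gaussW z) := by ring
  have hK'int : ∀ x, Integrable (fun z => K' x z) := by
    intro x
    obtain ⟨C2, hC2, hb⟩ := hK'bound x
    exact Integrable.mono' (hfint.const_mul C2) (hK'cont x).aestronglyMeasurable
      (Eventually.of_forall fun z => hb x z (Metric.mem_ball_self one_pos))
  -- differentiation under the integral sign
  have hH : ∀ x₀, HasFDerivAt (fun x => ∫ z, f z * kern a c x z) (∫ z, K' x₀ z) x₀ := by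
    intro x₀
    obtain ⟨C2, hC2, hb⟩ := hK'bound x₀
    apply hasFDerivAt_integral_of_dominated_of_fderiv_le
      (F := fun x z => f z * kern a c x z) (F' := K')
      (bound := fun z => C2 * (f z * gaussW z)) (Metric.ball_mem_nhds x₀ one_pos)
    · exact Eventually.of_forall fun x =>
        (hfc.mul (continuous_kern_right a c x)).aestronglyMeasurable
    · exact hfK x₀
    · exact (hK'cont x₀).aestronglyMeasurable
    · exact Eventually.of_forall fun z x hx => hb x z hx
    · exact hfint.const_mul C2
    · exact Eventually.of_forall fun z x _ => hK'deriv z x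
  set G : (Fin (n + 1) → ℝ) → ℝ :=
    fun x => (c ^ (n + 1) : ℝ)⁻¹ * ∫ z, f z * kern a c x z with hGdef
  have hGm : (fun x => ∫ y : Fin (n + 1) → ℝ,
      f (fun i => a * x i + c * y i) * gaussW y) = G :=
    funext fun x => mehler_eq_kernel a c hc f x
  have hGd : ∀ x, HasFDerivAt G ((c ^ (n + 1) : ℝ)⁻¹ • ∫ z, K' x z) x :=
    fun x => (hH x).const_mul _
  have hGgrad : ∀ x i, grad G x i = (c ^ (n + 1) : ℝ)⁻¹ * (2 * π * a / c ^ 2) *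
      ∫ z, f z * ((z i - a * x i) * kern a c x z) := by
    intro x i
    show fderiv ℝ G x (Pi.single i 1) = _
    rw [(hGd x).fderiv, ContinuousLinearMap.smul_apply,
      ContinuousLinearMap.integral_apply (hK'int x)]
    have h2 : ∀ z, (K' x z) (Pi.single i 1)
        = 2 * π * a / c ^ 2 * (f z * ((z i - a * x i) * kern a c x z)) := by
      intro z
      show (f z • ((kern a c x z * (2 * π * a / c ^ 2)) •
        ∑ j, (z j - a * x j) • (prj j : (Fin (n + 1) → ℝ) →L[ℝ] ℝ))) (Pi.single i 1) = _
      rw [ContinuousLinearMap.smul_apply, ContinuousLinearMap.smul_apply,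
        comb_apply_single]
      simp only [smul_eq_mul]
      ring
    rw [show (fun z => (K' x z) (Pi.single i 1)) = fun z =>
      2 * π * a / c ^ 2 * (f z * ((z i - a * x i) * kern a c x z)) from funext h2,
      MeasureTheory.integral_const_mul, smul_eq_mul]
    ring
  -- integration by parts
  have hIBP : ∀ x i, ∫ z, grad f z i * kern a c x z
      = 2 * π / c ^ 2 * ∫ z, f z * ((z i - a * x i) * kern a c x z) := by
    intro x i
    have hdiff : Differentiable ℝ (fun w => f w * kern a c x w) := fun w =>
      ((hf.differentiable (by simp) w).mul (hasFDerivAt_kern_z a c x w).differentiableAt)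
    have hDeq : (fun z => fderiv ℝ (fun w => f w * kern a c x w) z (Pi.single i 1))
        = fun z => grad f z i * kern a c x z
          + (-2 * π / c ^ 2) * (f z * ((z i - a * x i) * kern a c x z)) := by
      funext z
      have hfz := (hf.differentiable (by simp) z).hasFDerivAt
      have hkz := hasFDerivAt_kern_z a c x z
      have hprod := hfz.fun_mul hkz
      rw [hprod.fderiv, ContinuousLinearMap.add_apply, ContinuousLinearMap.smul_apply,
        ContinuousLinearMap.smul_apply, ContinuousLinearMap.smul_apply,
        comb_apply_single]
      show f z * (kern a c x z * (-2 * π / c ^ 2) * (z i - a * x i))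
          + kern a c x z * (fderiv ℝ f z) (Pi.single i 1) = _
      show _ = (fderiv ℝ f z) (Pi.single i 1) * kern a c x z
          + (-2 * π / c ^ 2) * (f z * ((z i - a * x i) * kern a c x z))
      ring
    have hDint : Integrable
        (fun z => fderiv ℝ (fun w => f w * kern a c x w) z (Pi.single i 1)) := by
      rw [hDeq]
      exact (hgK x i).add ((hlinK x i).const_mul _)
    have hzero := integral_pderiv_eq_zero (fun w => f w * kern a c x w) hdiff i
      (hfK x) hDint
    rw [hDeq, integral_add (hgK x i) ((hlinK x i).const_mul _),
      MeasureTheory.integral_const_mul] at hzero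
    have h6 : ∫ z, grad f z i * kern a c x z
        = -((-2 * π / c ^ 2) * ∫ z, f z * ((z i - a * x i) * kern a c x z)) := by
      linarith
    rw [h6]
    ring
  have hGgrad2 : ∀ x i, grad G x i
      = (c ^ (n + 1) : ℝ)⁻¹ * a * ∫ z, grad f z i * kern a c x z := by
    intro x i
    rw [hGgrad x i, hIBP x i]
    have hπ : (π : ℝ) ≠ 0 := Real.pi_ne_zero
    field_simp
  -- positivity of G
  have hfkpos : ∀ x, 0 < ∫ z, f z * kern a c x z := by
    intro x
    refine (integral_pos_iff_support_of_nonneg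
      (fun z => mul_nonneg (hpos z).le (kern_pos a c x z).le) (hfK x)).mpr ?_
    have hsupp : Function.support (fun z => f z * kern a c x z) = Set.univ :=
      Set.eq_univ_of_forall fun z => ne_of_gt (mul_pos (hpos z) (kern_pos a c x z))
    rw [hsupp]
    exact isOpen_univ.measure_pos volume ⟨0, trivial⟩
  have hGpos : ∀ x, 0 < G x := fun x => mul_pos (inv_pos.mpr hcd) (hfkpos x)
  -- Cauchy–Schwarz
  have hCS : ∀ x i, (∫ z, grad f z i * kern a c x z) ^ 2
      ≤ (∫ z, grad f z i ^ 2 / f z * kern a c x z) * ∫ z, f z * kern a c x z :=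
    fun x i => integral_sq_le volume (fun z => grad f z i) f (kern a c x)
      (fun z => (kern_pos a c x z).le) hpos (hgK x i) (hgK2 x i) (hfK x)
  have hsum_eq : ∀ x, ∑ i, ∫ z, grad f z i ^ 2 / f z * kern a c x z
      = ∫ z, ρ z * kern a c x z := by
    intro x
    rw [← MeasureTheory.integral_finset_sum Finset.univ (fun i _ => hgK2 x i)]
    congr 1
    funext z
    rw [← Finset.sum_mul, ← Finset.sum_div]
  -- pointwise inequality
  have hΦ : ∀ x, (∑ i, grad G x i ^ 2) / G x * gaussW x
      ≤ (a ^ 2 * (c ^ (n + 1) : ℝ)⁻¹ * ∫ z, ρ z * kern a c x z) * gaussW x := by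
    intro x
    apply mul_le_mul_of_nonneg_right _ (gaussW_pos x).le
    rw [div_le_iff₀ (hGpos x)]
    have hA0 : 0 ≤ ∫ z, ρ z * kern a c x z :=
      integral_nonneg fun z => mul_nonneg (hρ0 z) (kern_pos a c x z).le
    have h1 : ∑ i, grad G x i ^ 2 ≤ ((c ^ (n + 1) : ℝ)⁻¹) ^ 2 * a ^ 2 *
        ((∫ z, ρ z * kern a c x z) * ∫ z, f z * kern a c x z) := by
      calc ∑ i, grad G x i ^ 2
          = ∑ i, ((c ^ (n + 1) : ℝ)⁻¹ * a * ∫ z, grad f z i * kern a c x z) ^ 2 :=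
            Finset.sum_congr rfl fun i _ => by rw [hGgrad2 x i]
        _ = ((c ^ (n + 1) : ℝ)⁻¹) ^ 2 * a ^ 2 *
            ∑ i, (∫ z, grad f z i * kern a c x z) ^ 2 := by
            rw [Finset.mul_sum]
            exact Finset.sum_congr rfl fun i _ => by ring
        _ ≤ ((c ^ (n + 1) : ℝ)⁻¹) ^ 2 * a ^ 2 *
            ∑ i, ((∫ z, grad f z i ^ 2 / f z * kern a c x z)
              * ∫ z, f z * kern a c x z) := by
            apply mul_le_mul_of_nonneg_left
              (Finset.sum_le_sum fun i _ => hCS x i) (by positivity)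
        _ = ((c ^ (n + 1) : ℝ)⁻¹) ^ 2 * a ^ 2 *
            ((∑ i, ∫ z, grad f z i ^ 2 / f z * kern a c x z)
              * ∫ z, f z * kern a c x z) := by rw [← Finset.sum_mul]
        _ = ((c ^ (n + 1) : ℝ)⁻¹) ^ 2 * a ^ 2 *
            ((∫ z, ρ z * kern a c x z) * ∫ z, f z * kern a c x z) := by
            rw [hsum_eq x]
    calc ∑ i, grad G x i ^ 2 ≤ ((c ^ (n + 1) : ℝ)⁻¹) ^ 2 * a ^ 2 *
          ((∫ z, ρ z * kern a c x z) * ∫ z, f z * kern a c x z) := h1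
      _ = a ^ 2 * (c ^ (n + 1) : ℝ)⁻¹ * (∫ z, ρ z * kern a c x z) * G x := by
          rw [hGdef]
          ring
  -- product integrability
  have hprod : Integrable (fun p : (Fin (n + 1) → ℝ) × (Fin (n + 1) → ℝ) =>
      ρ p.2 * kern a c p.1 p.2 * gaussW p.1)
      ((volume : Measure (Fin (n + 1) → ℝ)).prod volume) := by
    have hmeas : AEStronglyMeasurable
        (fun p : (Fin (n + 1) → ℝ) × (Fin (n + 1) → ℝ) =>
          ρ p.2 * kern a c p.1 p.2 * gaussW p.1) (volume.prod volume) := by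
      apply Continuous.aestronglyMeasurable
      exact ((hρc.comp continuous_snd).mul (continuous_kern a c)).mul
        (continuous_gaussW.comp continuous_fst)
    refine (integrable_prod_iff' hmeas).mpr ⟨?_, ?_⟩
    · refine Eventually.of_forall fun z => ?_
      show Integrable (fun x => ρ z * kern a c x z * gaussW x) volume
      refine Integrable.mono' ((integrable_gaussW (n + 1)).const_mul (ρ z)) ?_ ?_
      · apply Continuous.aestronglyMeasurable
        exact (continuous_const.mul (continuous_kern_left a c z)).mul continuous_gaussW
      · filter_upwards with x
        rw [Real.norm_eq_abs, abs_of_nonneg (mul_nonneg (mul_nonneg (hρ0 z)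
          (kern_pos a c x z).le) (gaussW_pos x).le)]
        calc ρ z * kern a c x z * gaussW x ≤ ρ z * 1 * gaussW x := by
              apply mul_le_mul_of_nonneg_right _ (gaussW_pos x).le
              exact mul_le_mul_of_nonneg_left (kern_le_one a c hc x z) (hρ0 z)
          _ = ρ z * gaussW x := by ring
    · have heq : (fun z => ∫ x, ‖ρ z * kern a c x z * gaussW x‖)
          = fun z => c ^ (n + 1) * (ρ z * gaussW z) := by
        funext z
        have h1 : (fun x => ‖ρ z * kern a c x z * gaussW x‖)
            = fun x => ρ z * (kern a c x z * gaussW x) := by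
          funext x
          rw [Real.norm_eq_abs, abs_of_nonneg (mul_nonneg (mul_nonneg (hρ0 z)
            (kern_pos a c x z).le) (gaussW_pos x).le)]
          ring
        rw [h1, MeasureTheory.integral_const_mul, kern_marginal a c ha hc hac z]
        ring
      rw [heq]
      exact hIρ.const_mul _
  -- Fubini computation
  have hswap : ∫ x, (∫ z, ρ z * kern a c x z) * gaussW x
      = c ^ (n + 1) * ∫ z, ρ z * gaussW z := by
    have h1 : (fun x => (∫ z, ρ z * kern a c x z) * gaussW x)
        = fun x => ∫ z, ρ z * kern a c x z * gaussW x := by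
      funext x
      exact (MeasureTheory.integral_mul_const _ _).symm
    rw [h1]
    calc ∫ x, ∫ z, ρ z * kern a c x z * gaussW x
        = ∫ z, ∫ x, ρ z * kern a c x z * gaussW x := by
          exact MeasureTheory.integral_integral_swap hprod
      _ = ∫ z, ρ z * (c ^ (n + 1) * gaussW z) := by
          congr 1
          funext z
          rw [show (fun x => ρ z * kern a c x z * gaussW x)
            = fun x => ρ z * (kern a c x z * gaussW x) from funext fun x => by ring,
            MeasureTheory.integral_const_mul, kern_marginal a c ha hc hac z]
      _ = c ^ (n + 1) * ∫ z, ρ z * gaussW z := by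
          rw [← MeasureTheory.integral_const_mul]
          congr 1
          funext z
          ring
  -- RHS integrability
  have hRint : Integrable (fun x =>
      (a ^ 2 * (c ^ (n + 1) : ℝ)⁻¹ * ∫ z, ρ z * kern a c x z) * gaussW x) := by
    have h0 : Integrable (fun x => ∫ z, ρ z * kern a c x z * gaussW x) :=
      hprod.integral_prod_left
    have h1 : (fun x => (a ^ 2 * (c ^ (n + 1) : ℝ)⁻¹ * ∫ z, ρ z * kern a c x z) * gaussW x)
        = fun x => a ^ 2 * (c ^ (n + 1) : ℝ)⁻¹ * ∫ z, ρ z * kern a c x z * gaussW x := by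
      funext x
      rw [MeasureTheory.integral_mul_const]
      ring
    rw [h1]
    exact h0.const_mul _
  -- final assembly
  rw [hGm]
  have hinfof : info f = ∫ z, ρ z * gaussW z := rfl
  calc info G = ∫ x, (∑ i, grad G x i ^ 2) / G x * gaussW x := rfl
    _ ≤ ∫ x, (a ^ 2 * (c ^ (n + 1) : ℝ)⁻¹ * ∫ z, ρ z * kern a c x z) * gaussW x := by
        apply integral_mono_of_nonneg (Eventually.of_forall fun x => ?_) hRint
          (Eventually.of_forall hΦ)
        exact mul_nonneg (div_nonneg (Finset.sum_nonneg fun i _ => sq_nonneg _)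
          (hGpos x).le) (gaussW_pos x).le
    _ = a ^ 2 * (c ^ (n + 1) : ℝ)⁻¹ * ∫ x, (∫ z, ρ z * kern a c x z) * gaussW x := by
        rw [← MeasureTheory.integral_const_mul]
        congr 1
        funext x
        ring
    _ = a ^ 2 * (c ^ (n + 1) : ℝ)⁻¹ * (c ^ (n + 1) * ∫ z, ρ z * gaussW z) := by
        rw [hswap]
    _ = a ^ 2 * ∫ z, ρ z * gaussW z := by
        field_simp
    _ = a ^ 2 * info f := by rw [hinfof]

end OUaux


/-- The Fisher information is contractive under the Ornstein–Uhlenbeck semigroup: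
    I(P_s f) ≤ e^{-2s} I(f). -/
theorem info_ou_le (d : ℕ) (f : (Fin d → ℝ) → ℝ) (hf : ContDiff ℝ (⊤ : ℕ∞) f)
    (hpos : ∀ x, 0 < f x)
    (hfint : Integrable (fun x : Fin d → ℝ => f x * gaussW x))
    (hI : Integrable (fun x : Fin d → ℝ => (∑ i, grad f x i ^ 2) / f x * gaussW x))
    (s : ℝ) (hs : 0 ≤ s) :
    info (ouSg s f) ≤ Real.exp (-2 * s) * info f := by
  cases d with
  | zero =>
    have h0 : ∀ g : (Fin 0 → ℝ) → ℝ, info g = 0 := by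
      intro g
      show (∫ x : Fin 0 → ℝ, (∑ i, grad g x i ^ 2) / g x * gaussW x) = 0
      have h1 : (fun x : Fin 0 → ℝ => (∑ i, grad g x i ^ 2) / g x * gaussW x)
          = fun _ => 0 := by
        funext x
        simp
      rw [h1, integral_zero]
    rw [h0, h0, mul_zero]
  | succ n =>
    rcases eq_or_lt_of_le hs with hs0 | hspos
    · -- s = 0
      have hou : ouSg 0 f = f := by
        funext x
        show (∫ y : Fin (n + 1) → ℝ, f (fun i => Real.exp (-0) * x i
          + Real.sqrt (1 - Real.exp (-2 * 0)) * y i) * gaussW y) = f x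
        have h1 : (fun y : Fin (n + 1) → ℝ => f (fun i => Real.exp (-0) * x i
            + Real.sqrt (1 - Real.exp (-2 * 0)) * y i) * gaussW y)
            = fun y => f x * gaussW y := by
          funext y
          congr 1
          congr 1
          funext i
          simp
        rw [h1, MeasureTheory.integral_const_mul, OUaux.integral_gaussW, mul_one]
      rw [← hs0, hou]
      simp
    · -- s > 0
      set a : ℝ := Real.exp (-s) with hadef
      set c : ℝ := Real.sqrt (1 - Real.exp (-2 * s)) with hcdef
      have ha : 0 < a := Real.exp_pos _
      have hexp2 : Real.exp (-2 * s) = a ^ 2 := by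
        rw [hadef, sq, ← Real.exp_add]
        congr 1
        ring
      have hlt1 : Real.exp (-2 * s) < 1 := Real.exp_lt_one_iff.mpr (by linarith)
      have hc : 0 < c := Real.sqrt_pos.mpr (by linarith)
      have hc2 : c ^ 2 = 1 - Real.exp (-2 * s) := Real.sq_sqrt (by linarith)
      have hac : a ^ 2 + c ^ 2 = 1 := by
        rw [hc2, ← hexp2]
        ring
      have hmain := OUaux.main_aux f hf hpos hfint hI a c ha hc hac
      rw [hexp2]
      exact hmain
end

section
/- For a smooth function F : ℝ^{M+N} → ℝ, F = F(v,w) with v ∈ ℝ^M, w ∈ ℝ^N, which is invariant under rotations of w (so ∇_w F(v,w) = ℓ(v,|w|)·w for some scalar function ℓ), the squared angular momentum satisfies |LF|² = |v|²|∇_v F|² - (v·∇_v F)² + |w|² |ℓ v - ∇_v F|², where |LF|² = Σ_{i<j≤M} |v_i ∂_{v_j}F - v_j ∂_{v_i}F|² + Σ_{i≤M<j} |w_j ∂_{v_i}F - v_i ∂_{w_j}F|² + Σ_{M<i<j} |w_i ∂_{w_j}F - w_j ∂_{w_i}F|². -/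
/-- Partial derivative of F(v,w) in the i-th v-coordinate. -/
noncomputable def dV {M N : ℕ} (F : (Fin M → ℝ) → (Fin N → ℝ) → ℝ)
    (v : Fin M → ℝ) (w : Fin N → ℝ) (i : Fin M) : ℝ :=
  fderiv ℝ (fun v' => F v' w) v (Pi.single i 1)

/-- Partial derivative of F(v,w) in the j-th w-coordinate. -/
noncomputable def dW {M N : ℕ} (F : (Fin M → ℝ) → (Fin N → ℝ) → ℝ)
    (v : Fin M → ℝ) (w : Fin N → ℝ) (j : Fin N) : ℝ :=
  fderiv ℝ (fun w' => F v w') w (Pi.single j 1)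

/-- Lagrange's identity. -/
lemma lagrange_identity {n : ℕ} (a b : Fin n → ℝ) :
    ∑ i : Fin n, ∑ j : Fin n, (if i < j then (a i * b j - a j * b i) ^ 2 else 0)
    = (∑ i, a i ^ 2) * (∑ i, b i ^ 2) - (∑ i, a i * b i) ^ 2 := by
  have hfull : ∑ i : Fin n, ∑ j : Fin n, (a i * b j - a j * b i) ^ 2
      = 2 * ((∑ i, a i ^ 2) * (∑ i, b i ^ 2) - (∑ i, a i * b i) ^ 2) := by
    have inner : ∀ i : Fin n, ∑ j : Fin n, (a i * b j - a j * b i) ^ 2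
        = a i ^ 2 * (∑ j, b j ^ 2) + b i ^ 2 * (∑ j, a j ^ 2)
          - a i * b i * (2 * ∑ j, a j * b j) := by
      intro i
      rw [Finset.mul_sum, Finset.mul_sum, Finset.mul_sum (a := 2), Finset.mul_sum,
        ← Finset.sum_add_distrib, ← Finset.sum_sub_distrib]
      exact Finset.sum_congr rfl fun j _ => by ring
    calc ∑ i : Fin n, ∑ j : Fin n, (a i * b j - a j * b i) ^ 2
        = ∑ i : Fin n, (a i ^ 2 * (∑ j, b j ^ 2) + b i ^ 2 * (∑ j, a j ^ 2)
            - a i * b i * (2 * ∑ j, a j * b j)) :=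
          Finset.sum_congr rfl fun i _ => inner i
      _ = (∑ i, a i ^ 2) * (∑ j, b j ^ 2) + (∑ i, b i ^ 2) * (∑ j, a j ^ 2)
            - (∑ i, a i * b i) * (2 * ∑ j, a j * b j) := by
          rw [Finset.sum_sub_distrib, Finset.sum_add_distrib,
            ← Finset.sum_mul, ← Finset.sum_mul, ← Finset.sum_mul]
      _ = 2 * ((∑ i, a i ^ 2) * (∑ i, b i ^ 2) - (∑ i, a i * b i) ^ 2) := by ring
  have hsplit : ∑ i : Fin n, ∑ j : Fin n, (a i * b j - a j * b i) ^ 2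
      = 2 * ∑ i : Fin n, ∑ j : Fin n,
          (if i < j then (a i * b j - a j * b i) ^ 2 else 0) := by
    have tri : ∀ i j : Fin n, (a i * b j - a j * b i) ^ 2
        = (if i < j then (a i * b j - a j * b i) ^ 2 else 0)
          + (if j < i then (a i * b j - a j * b i) ^ 2 else 0) := by
      intro i j
      rcases lt_trichotomy i j with h | h | h
      · simp [h, not_lt_of_gt h]
      · subst h; simp
      · simp [h, not_lt_of_gt h]
    calc ∑ i : Fin n, ∑ j : Fin n, (a i * b j - a j * b i) ^ 2
        = ∑ i : Fin n, ∑ j : Fin n,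
            ((if i < j then (a i * b j - a j * b i) ^ 2 else 0)
              + (if j < i then (a i * b j - a j * b i) ^ 2 else 0)) :=
          Finset.sum_congr rfl fun i _ => Finset.sum_congr rfl fun j _ => tri i j
      _ = (∑ i : Fin n, ∑ j : Fin n, (if i < j then (a i * b j - a j * b i) ^ 2 else 0))
          + ∑ i : Fin n, ∑ j : Fin n,
              (if j < i then (a i * b j - a j * b i) ^ 2 else 0) := by
          simp only [Finset.sum_add_distrib]
      _ = (∑ i : Fin n, ∑ j : Fin n, (if i < j then (a i * b j - a j * b i) ^ 2 else 0))
          + ∑ j : Fin n, ∑ i : Fin n,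
              (if j < i then (a i * b j - a j * b i) ^ 2 else 0) := by
          congr 1
          exact Finset.sum_comm
          
      _ = 2 * ∑ i : Fin n, ∑ j : Fin n,
            (if i < j then (a i * b j - a j * b i) ^ 2 else 0) := by
          rw [two_mul]
          congr 1
          refine Finset.sum_congr rfl fun i _ => Finset.sum_congr rfl fun j _ => ?_
          split_ifs
          · ring
          · rfl
  linarith [hfull, hsplit]

/-- For F smooth on ℝ^{M+N} invariant under rotations of w (so ∇_w F = ℓ(v,|w|)·w),
    |LF|² = |v|²|∇_v F|² - (v·∇_v F)² + |w|²|ℓv - ∇_v F|². -/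
theorem angular_momentum_sq (M N : ℕ) (F : (Fin M → ℝ) → (Fin N → ℝ) → ℝ)
    (hF : ContDiff ℝ (⊤ : ℕ∞) (fun p : (Fin M → ℝ) × (Fin N → ℝ) => F p.1 p.2))
    (ℓ : (Fin M → ℝ) → ℝ → ℝ)
    (hℓ : ∀ v w j, dW F v w j = ℓ v (Real.sqrt (∑ j', w j' ^ 2)) * w j)
    (v : Fin M → ℝ) (w : Fin N → ℝ) :
    (∑ i : Fin M, ∑ j : Fin M,
        if i < j then (v i * dV F v w j - v j * dV F v w i) ^ 2 else 0)
      + (∑ i : Fin M, ∑ j : Fin N, (w j * dV F v w i - v i * dW F v w j) ^ 2)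
      + (∑ i : Fin N, ∑ j : Fin N,
          if i < j then (w i * dW F v w j - w j * dW F v w i) ^ 2 else 0)
    = (∑ i, v i ^ 2) * (∑ i, dV F v w i ^ 2) - (∑ i, v i * dV F v w i) ^ 2
      + (∑ j, w j ^ 2)
        * (∑ i, (ℓ v (Real.sqrt (∑ j', w j' ^ 2)) * v i - dV F v w i) ^ 2) := by
  set c := ℓ v (Real.sqrt (∑ j', w j' ^ 2)) with hc
  have h1 := lagrange_identity v (dV F v w)
  have h3 : (∑ i : Fin N, ∑ j : Fin N,
      if i < j then (w i * dW F v w j - w j * dW F v w i) ^ 2 else 0) = 0 := by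
    apply Finset.sum_eq_zero; intro i _
    apply Finset.sum_eq_zero; intro j _
    rw [hℓ, hℓ, ← hc]
    have : w i * (c * w j) - w j * (c * w i) = 0 := by ring
    rw [this]
    simp
  have h2 : (∑ i : Fin M, ∑ j : Fin N, (w j * dV F v w i - v i * dW F v w j) ^ 2)
      = (∑ j, w j ^ 2) * (∑ i, (c * v i - dV F v w i) ^ 2) := by
    rw [Finset.sum_mul_sum, ← Finset.sum_product', Finset.sum_comm, ← Finset.sum_product']
    apply Finset.sum_congr rfl
    intro p _
    rw [hℓ, ← hc]
    ring
  rw [h1, h2, h3]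
  ring
end
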